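/- Let μ be a finite Borel measure on (∂U,δ) and g a doubling gauge function (right-continuous, non-decreasing on (0,r₀), lim₀ g = 0, g(2r) ≤ Cg(r)). Suppose (i) for μ-almost all u, limsup_{r→0} μ(B(u,r))/g(r) = κ for some constant κ ∈ (0,∞), and (ii) there is κ₀ ∈ (0,κ) with H_g({u ∈ ∂U : limsup_{r→0} μ(B(u,r))/g(r) ≤ κ₀}) = 0. Then H_g(· ∩ supp μ) = κ⁻¹ μ as measures. -/

import Mathlib

open Filter Set

/-- The boundary ∂U: infinite sequences of positive integers. -/
abbrev pU := ℕ → ℕ+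

-- δ(u,v) = exp(-|u∧v|), where |u∧v| is the length of the longest common
-- prefix of u and v; δ(u,u) = 0.
open Classical in
noncomputable def delta (u v : pU) : ℝ :=
  if h : u = v then 0 else Real.exp (-(Nat.find (Function.ne_iff.mp h) : ℝ))

/-- Open ball in (∂U, δ). -/
def dball (u : pU) (r : ℝ) : Set pU := {v | delta u v < r}

open ENNReal MeasureTheory in
instance : MeasurableSpace ℕ+ := ⊤

/-- Diameter of a subset of ∂U for the metric δ, valued in [0,∞]. -/
noncomputable def ediam (A : Set pU) : ENNReal :=
  ⨆ u ∈ A, ⨆ v ∈ A, ENNReal.ofReal (delta u v)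

/-- g(diam S), with the convention that sets of null diameter contribute 0. -/
noncomputable def gaugeOf (g : ℝ → ℝ) (S : Set pU) : ENNReal :=
  if ediam S = 0 then 0 else ENNReal.ofReal (g (ediam S).toReal)

/-- Pre-measure: infimum of Σ g(diam Cₙ) over countable covers by sets of
diameter at most ε. -/
noncomputable def Hpre (g : ℝ → ℝ) (ε : ℝ) (A : Set pU) : ENNReal :=
  ⨅ (C : ℕ → Set pU) (_ : A ⊆ ⋃ n, C n)
    (_ : ∀ n, ediam (C n) ≤ ENNReal.ofReal ε), ∑' n, gaugeOf g (C n)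

/-- The g-Hausdorff measure H_g on (∂U, δ). -/
noncomputable def Hmeas (g : ℝ → ℝ) (A : Set pU) : ENNReal :=
  ⨆ (ε : ℝ) (_ : 0 < ε), Hpre g ε A

open MeasureTheory in
/-- The topological support of a measure on (∂U, δ). -/
def msupport (μ : Measure pU) : Set pU := {u | ∀ r : ℝ, 0 < r → 0 < μ (dball u r)}

/-!
Two density comparisons drive the proof. If the upper density `limsup μ(B(u,r))/g(r)` is at most
`c` on `E`, then `μ E ≤ c H_g(E)`: a set of small diameter `D` meeting `E` at `u` lies in
`B(u,r)` for every `r > D`, and right-continuity of `g` lets `r ↓ D`. If it is at least `c` on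
`F`, then `c H_g(F) ≤ μ(F)`: balls of `∂U` are cylinders, so any two are nested or disjoint, and
the maximal cylinders on which `μ` beats `c g(diam)` form a disjoint countable cover of `F`
inside any open `V ⊇ F`; outer regularity of `μ` finishes. With `c = κ` these two bounds give
`H_g = κ⁻¹ μ` on the `μ`-conull set where the density equals `κ`, which lies in `supp μ`. The
rest of `supp μ` is `H_g`-null: where the density is at most `κ₀` by hypothesis, and where it
exceeds `κ₀` because that part is `μ`-null.
-/

open Filter Set PiNat
open MeasureTheory hiding cylinder
open scoped ENNReal Topology

instance : BorelSpace ℕ+ := ⟨by rw [borel_eq_top_of_discrete]; rfl⟩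

section Cylinders

variable {α : Type*}

lemma countable_setOf_cylinder [Countable α] :
    {s : Set (ℕ → α) | ∃ x n, s = cylinder x n}.Countable := by
  refine (countable_range fun l : List α => {y | res y l.length = l}).mono ?_
  rintro _ ⟨x, n, rfl⟩
  exact ⟨res x n, by simp only [cylinder_eq_res, res_length]⟩

/-- Strong Vitali property: choosing around each point the largest cylinder satisfying `Q`
yields pairwise disjoint cylinders. -/
theorem exists_pairwiseDisjoint_cylinder_cover [Countable α] (Q : Set (ℕ → α) → Prop)
    {F : Set (ℕ → α)} (hQ : ∀ x ∈ F, ∃ n, Q (cylinder x n)) :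
    ∃ T : Set (Set (ℕ → α)), T ⊆ {s | ∃ x n, s = cylinder x n} ∧ T.Countable ∧
      T.PairwiseDisjoint id ∧ (∀ s ∈ T, Q s) ∧ F ⊆ ⋃₀ T := by
  classical
  let N : F → ℕ := fun x => Nat.find (hQ x x.2)
  have hnested : ∀ x y : F, ∀ z ∈ cylinder (x : ℕ → α) (N x), z ∈ cylinder (y : ℕ → α) (N y) →
      cylinder (x : ℕ → α) (N x) = cylinder y (N y) := by
    intro x y z hzx hzy
    wlog hxy : N x ≤ N y generalizing x y
    · exact (this y x hzy hzx (le_of_not_ge hxy)).symm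
    have hzy' : z ∈ cylinder (y : ℕ → α) (N x) := cylinder_anti _ hxy hzy
    have hcyl : cylinder (y : ℕ → α) (N x) = cylinder x (N x) :=
      (mem_cylinder_iff_eq.1 hzy').symm.trans (mem_cylinder_iff_eq.1 hzx)
    have hyx : N y ≤ N x := Nat.find_min' _ (hcyl ▸ Nat.find_spec (hQ x x.2))
    rw [← hcyl, le_antisymm hyx hxy]
  have hT : range (fun x : F => cylinder (x : ℕ → α) (N x)) ⊆ {s | ∃ x n, s = cylinder x n} := by
    rintro _ ⟨x, rfl⟩
    exact ⟨x, N x, rfl⟩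
  refine ⟨_, hT, countable_setOf_cylinder.mono hT, ?_, ?_, ?_⟩
  · rintro _ ⟨x, rfl⟩ _ ⟨y, rfl⟩ hne
    exact disjoint_left.2 fun z hzx hzy => hne (hnested x y z hzx hzy)
  · rintro _ ⟨x, rfl⟩
    exact Nat.find_spec (hQ x x.2)
  · intro x hx
    exact mem_sUnion.2 ⟨_, ⟨⟨x, hx⟩, rfl⟩, self_mem_cylinder _ _⟩

lemma exists_cylinder_subset_of_isOpen [TopologicalSpace α] [DiscreteTopology α]
    {V : Set (ℕ → α)} (hV : IsOpen V) {u : ℕ → α} (hu : u ∈ V) : ∃ n, cylinder u n ⊆ V := by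
  obtain ⟨_, ⟨x, n, rfl⟩, hux, hxV⟩ :=
    (isTopologicalBasis_cylinders fun _ => α).exists_subset_of_mem_open hu hV
  exact ⟨n, (mem_cylinder_iff_eq.1 hux).trans_subset hxV⟩

end Cylinders

section Geometry

lemma delta_of_ne {u v : pU} (h : u ≠ v) : delta u v = Real.exp (-(firstDiff u v : ℝ)) := by
  rw [delta, dif_neg h, firstDiff_def, dif_pos h]
  congr

lemma delta_le_of_mem_cylinder {u v : pU} {n : ℕ} (hv : v ∈ cylinder u n) :
    delta u v ≤ Real.exp (-(n : ℝ)) := by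
  rcases eq_or_ne u v with rfl | huv
  · rw [delta, dif_pos rfl]
    positivity
  rw [delta_of_ne huv, Real.exp_le_exp, neg_le_neg_iff, Nat.cast_le, firstDiff_comm]
  exact (mem_cylinder_iff_le_firstDiff huv.symm n).1 hv

lemma dball_eq_cylinder (u : pU) {r : ℝ} (hr : 0 < r) :
    ∃ n : ℕ, Real.exp (-(n : ℝ)) < r ∧ dball u r = cylinder u n := by
  classical
  have hex : ∃ n : ℕ, Real.exp (-(n : ℝ)) < r := by
    obtain ⟨n, hn⟩ := exists_nat_gt (-Real.log r)
    exact ⟨n, by rw [← Real.exp_log hr, Real.exp_lt_exp]; linarith⟩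
  have hiff : ∀ k : ℕ, Real.exp (-(k : ℝ)) < r ↔ Nat.find hex ≤ k := fun k =>
    ⟨Nat.find_min' hex, fun hk => (Real.exp_le_exp.2 (by simpa using hk)).trans_lt
      (Nat.find_spec hex)⟩
  refine ⟨Nat.find hex, Nat.find_spec hex, Set.ext fun v => ?_⟩
  rcases eq_or_ne u v with rfl | huv
  · simp [dball, delta, hr]
  rw [dball, mem_ofPred_eq, delta_of_ne huv, hiff, firstDiff_comm,
    mem_cylinder_iff_le_firstDiff huv.symm]

lemma ofReal_delta_le_ediam {S : Set pU} {u v : pU} (hu : u ∈ S) (hv : v ∈ S) :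
    ENNReal.ofReal (delta u v) ≤ ediam S :=
  le_iSup₂_of_le u hu (le_iSup₂ (f := fun w (_ : w ∈ S) => ENNReal.ofReal (delta u w)) v hv)

lemma ediam_cylinder_le (u : pU) (n : ℕ) :
    ediam (cylinder u n) ≤ ENNReal.ofReal (Real.exp (-(n : ℝ))) := by
  refine iSup₂_le fun _ hv => iSup₂_le fun w hw => ENNReal.ofReal_le_ofReal ?_
  rw [mem_cylinder_iff_eq] at hv
  exact delta_le_of_mem_cylinder (hv ▸ hw)

lemma subset_dball_of_ediam_lt {S : Set pU} {u : pU} (hu : u ∈ S) {r : ℝ}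
    (hS : ediam S < ENNReal.ofReal r) : S ⊆ dball u r := fun _ hv =>
  ((ENNReal.ofReal_lt_ofReal_iff'.1 ((ofReal_delta_le_ediam hu hv).trans_lt hS)).1)

end Geometry

section Hausdorff

-- Giving oversized sets cost `∞` restricts `ofFunction` to the covers admitted in `Hpre`.
noncomputable def HpreOuter (g : ℝ → ℝ) (ε : ℝ) : OuterMeasure pU :=
  OuterMeasure.ofFunction (fun S => if ediam S ≤ ENNReal.ofReal ε then gaugeOf g S else ∞)
    (by simp [ediam, gaugeOf])

lemma HpreOuter_apply (g : ℝ → ℝ) (ε : ℝ) (A : Set pU) : HpreOuter g ε A = Hpre g ε A := by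
  rw [HpreOuter, OuterMeasure.ofFunction_apply]
  refine le_antisymm
    (le_iInf fun C => le_iInf₂ fun hcov hdiam => iInf₂_le_of_le C hcov (by simp [hdiam]))
    (le_iInf₂ fun C hcov => ?_)
  by_cases hdiam : ∀ n, ediam (C n) ≤ ENNReal.ofReal ε
  · exact iInf_le_of_le C (iInf₂_le_of_le hcov hdiam (by simp [hdiam]))
  · obtain ⟨n, hn⟩ := not_forall.1 hdiam
    exact le_top.trans ((if_neg hn).symm.trans_le (ENNReal.le_tsum n))

noncomputable def HmeasOuter (g : ℝ → ℝ) : OuterMeasure pU :=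
  ⨆ (ε : ℝ) (_ : 0 < ε), HpreOuter g ε

lemma HmeasOuter_apply (g : ℝ → ℝ) (A : Set pU) : HmeasOuter g A = Hmeas g A := by
  simp only [HmeasOuter, OuterMeasure.iSup_apply, HpreOuter_apply, Hmeas]

lemma Hmeas_mono (g : ℝ → ℝ) {s t : Set pU} (h : s ⊆ t) : Hmeas g s ≤ Hmeas g t := by
  simpa only [HmeasOuter_apply] using measure_mono (μ := HmeasOuter g) h

lemma Hmeas_le_of_subset_union_null (g : ℝ → ℝ) {s t N : Set pU} (h : s ⊆ t ∪ N)
    (hN : Hmeas g N = 0) : Hmeas g s ≤ Hmeas g t := by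
  simp only [← HmeasOuter_apply] at hN ⊢
  exact (measure_mono h).trans ((measure_union_le t N).trans (by rw [hN, add_zero]))

lemma Hmeas_union_null (g : ℝ → ℝ) {s t : Set pU} (hs : Hmeas g s = 0) (ht : Hmeas g t = 0) :
    Hmeas g (s ∪ t) = 0 := by
  simp only [← HmeasOuter_apply] at hs ht ⊢
  exact measure_union_null hs ht

lemma Hpre_le_Hmeas (g : ℝ → ℝ) {ε : ℝ} (hε : 0 < ε) (A : Set pU) : Hpre g ε A ≤ Hmeas g A :=
  le_iSup₂ (f := fun (ε : ℝ) (_ : 0 < ε) => Hpre g ε A) ε hε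

lemma Hpre_le_tsum (g : ℝ → ℝ) {ε : ℝ} {A : Set pU} {T : Set (Set pU)} (hT : T.Countable)
    (hAT : A ⊆ ⋃₀ T) (hdiam : ∀ s ∈ T, ediam s ≤ ENNReal.ofReal ε) :
    Hpre g ε A ≤ ∑' s : T, gaugeOf g s := by
  rw [← HpreOuter_apply]
  rw [sUnion_eq_biUnion] at hAT
  calc HpreOuter g ε A ≤ HpreOuter g ε (⋃ s ∈ T, s) := measure_mono hAT
    _ ≤ ∑' s : T, HpreOuter g ε s := measure_biUnion_le _ hT id
    _ ≤ ∑' s : T, gaugeOf g s := ENNReal.tsum_le_tsum fun s =>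
        (OuterMeasure.ofFunction_le _).trans (by simp [hdiam s s.2])

end Hausdorff

section Density

variable {g : ℝ → ℝ} {r0 : ℝ} {μ : Measure pU}

noncomputable def upperDensity (μ : Measure pU) (g : ℝ → ℝ) (u : pU) : ℝ≥0∞ :=
  limsup (fun r : ℝ => μ (dball u r) / ENNReal.ofReal (g r)) (𝓝[>] 0)

lemma mem_msupport_of_upperDensity_ne_zero {u : pU} (h : upperDensity μ g u ≠ 0) :
    u ∈ msupport μ := by
  intro r hr
  obtain ⟨r', hpos, hr'⟩ := ((frequently_lt_of_lt_limsup (by isBoundedDefault)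
    (pos_iff_ne_zero.2 h)).and_eventually (Ioo_mem_nhdsGT hr)).exists
  exact (pos_iff_ne_zero.2 (ENNReal.div_pos_iff.1 hpos).1).trans_le
    (measure_mono fun v hv => lt_trans hv hr'.2)

lemma gaugeOf_le_of_ediam_le (hg_mono : MonotoneOn g (Ioo 0 r0)) {S : Set pU} {r : ℝ}
    (hr : r ∈ Ioo 0 r0) (hS : ediam S ≤ ENNReal.ofReal r) :
    gaugeOf g S ≤ ENNReal.ofReal (g r) := by
  unfold gaugeOf
  split_ifs with h0
  · exact zero_le
  have hD : 0 < (ediam S).toReal :=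
    ENNReal.toReal_pos h0 (ne_top_of_le_ne_top ENNReal.ofReal_ne_top hS)
  have hDr : (ediam S).toReal ≤ r := ENNReal.toReal_le_of_le_ofReal hr.1.le hS
  exact ENNReal.ofReal_le_ofReal (hg_mono ⟨hD, hDr.trans_lt hr.2⟩ hr hDr)

lemma tendsto_gaugeOf (hg_rc : ∀ r ∈ Ioo 0 r0, ContinuousWithinAt g (Ici r) r)
    (hg_lim : Tendsto g (𝓝[>] 0) (𝓝 0)) {S : Set pU} (hS : ediam S < ENNReal.ofReal r0) :
    Tendsto (fun r => ENNReal.ofReal (g r)) (𝓝[>] (ediam S).toReal) (𝓝 (gaugeOf g S)) := by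
  unfold gaugeOf
  split_ifs with h0
  · simpa [h0] using ENNReal.tendsto_ofReal hg_lim
  have hD : (ediam S).toReal ∈ Ioo 0 r0 :=
    ⟨ENNReal.toReal_pos h0 hS.ne_top, ENNReal.toReal_lt_of_lt_ofReal hS⟩
  exact ENNReal.tendsto_ofReal ((hg_rc _ hD).tendsto.mono_left
    (nhdsWithin_mono _ Ioi_subset_Ici_self))

lemma exists_cylinder_mul_gaugeOf_le (hr0 : 0 < r0) (hg_mono : MonotoneOn g (Ioo 0 r0))
    {c : ℝ≥0∞} {u : pU} (hu : c < upperDensity μ g u) (n₀ : ℕ) {ε : ℝ} (hε : 0 < ε) :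
    ∃ n, cylinder u n ⊆ cylinder u n₀ ∧ ediam (cylinder u n) ≤ ENNReal.ofReal ε ∧
      c * gaugeOf g (cylinder u n) ≤ μ (cylinder u n) := by
  have hρ : 0 < min (min ε r0) (Real.exp (-(n₀ : ℝ))) := by positivity
  obtain ⟨r, hc, hr⟩ := ((frequently_lt_of_lt_limsup (by isBoundedDefault) hu).and_eventually
    (Ioo_mem_nhdsGT hρ)).exists
  simp only [lt_min_iff] at hr
  obtain ⟨n, hnr, hball⟩ := dball_eq_cylinder u hr.1
  have hdiam : ediam (cylinder u n) ≤ ENNReal.ofReal r :=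
    (ediam_cylinder_le u n).trans (ENNReal.ofReal_le_ofReal hnr.le)
  refine ⟨n, cylinder_anti u ?_, hdiam.trans (ENNReal.ofReal_le_ofReal hr.2.1.1.le), ?_⟩
  · have := hnr.trans hr.2.2
    rw [Real.exp_lt_exp, neg_lt_neg_iff, Nat.cast_lt] at this
    exact this.le
  calc c * gaugeOf g (cylinder u n)
      ≤ c * ENNReal.ofReal (g r) :=
        mul_le_mul_right (gaugeOf_le_of_ediam_le hg_mono ⟨hr.1, hr.2.1.2⟩ hdiam) c
    _ ≤ μ (cylinder u n) := hball ▸ (ENNReal.mul_lt_of_lt_div hc).le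

lemma mul_Hmeas_le_of_lt_upperDensity (hr0 : 0 < r0) (hg_mono : MonotoneOn g (Ioo 0 r0))
    {c : ℝ≥0∞} {F V : Set pU} (hV : IsOpen V) (hFV : F ⊆ V)
    (hF : ∀ u ∈ F, c < upperDensity μ g u) : c * Hmeas g F ≤ μ V := by
  simp only [Hmeas, ENNReal.mul_iSup]
  refine iSup₂_le fun ε hε => ?_
  obtain ⟨T, hTcyl, hTc, hTdisj, hTQ, hFT⟩ := exists_pairwiseDisjoint_cylinder_cover
    (fun s => s ⊆ V ∧ ediam s ≤ ENNReal.ofReal ε ∧ c * gaugeOf g s ≤ μ s) (F := F)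
    fun u hu => by
      obtain ⟨n₀, hn₀⟩ := exists_cylinder_subset_of_isOpen hV (hFV hu)
      obtain ⟨n, hn, hQ⟩ := exists_cylinder_mul_gaugeOf_le hr0 hg_mono (hF u hu) n₀ hε
      exact ⟨n, hn.trans hn₀, hQ⟩
  have hTmeas : ∀ s ∈ T, MeasurableSet s := fun s hs => by
    obtain ⟨x, n, rfl⟩ := hTcyl hs
    exact (isOpen_cylinder _ x n).measurableSet
  calc c * Hpre g ε F
      ≤ c * ∑' s : T, gaugeOf g s :=
        mul_le_mul_right (Hpre_le_tsum g hTc hFT fun s hs => (hTQ s hs).2.1) c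
    _ = ∑' s : T, c * gaugeOf g s := ENNReal.tsum_mul_left.symm
    _ ≤ ∑' s : T, μ s := ENNReal.tsum_le_tsum fun s => (hTQ s s.2).2.2
    _ = μ (⋃₀ T) := by
        rw [sUnion_eq_biUnion]; exact (measure_biUnion (f := id) hTc hTdisj hTmeas).symm
    _ ≤ μ V := measure_mono (sUnion_subset fun s hs => (hTQ s hs).1)

lemma mul_Hmeas_le_of_le_upperDensity [μ.OuterRegular] (hr0 : 0 < r0)
    (hg_mono : MonotoneOn g (Ioo 0 r0)) {c : ℝ≥0∞} {F : Set pU}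
    (hF : ∀ u ∈ F, c ≤ upperDensity μ g u) : c * Hmeas g F ≤ μ F := by
  refine ENNReal.mul_le_of_forall_lt fun c' hc' H hH => ?_
  rw [Set.measure_eq_iInf_isOpen F μ]
  refine le_iInf₂ fun V hFV => le_iInf fun hV => ?_
  exact (mul_le_mul_right hH.le c').trans
    (mul_Hmeas_le_of_lt_upperDensity hr0 hg_mono hV hFV fun u hu => hc'.trans_le (hF u hu))

lemma measure_le_mul_gaugeOf (hg_rc : ∀ r ∈ Ioo 0 r0, ContinuousWithinAt g (Ici r) r)
    (hg_lim : Tendsto g (𝓝[>] 0) (𝓝 0)) {c : ℝ≥0∞} (hc : c ≠ ∞) {ρ : ℝ} (hρ : ρ ≤ r0)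
    {S : Set pU} (hS : ediam S < ENNReal.ofReal ρ) {u : pU} (hu : u ∈ S)
    (hball : ∀ r ∈ Ioo 0 ρ, μ (dball u r) ≤ c * ENNReal.ofReal (g r)) :
    μ S ≤ c * gaugeOf g S := by
  have hDρ : (ediam S).toReal < ρ := ENNReal.toReal_lt_of_lt_ofReal hS
  refine ge_of_tendsto (ENNReal.Tendsto.const_mul
    (tendsto_gaugeOf hg_rc hg_lim (hS.trans_le (ENNReal.ofReal_le_ofReal hρ))) (Or.inr hc)) ?_
  filter_upwards [Ioo_mem_nhdsGT hDρ] with r hr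
  have hSr : ediam S < ENNReal.ofReal r := (ENNReal.lt_ofReal_iff_toReal_lt hS.ne_top).2 hr.1
  exact (measure_mono (subset_dball_of_ediam_lt hu hSr)).trans
    (hball r ⟨ENNReal.toReal_nonneg.trans_lt hr.1, hr.2⟩)

lemma measure_le_mul_Hpre (hg_rc : ∀ r ∈ Ioo 0 r0, ContinuousWithinAt g (Ici r) r)
    (hg_lim : Tendsto g (𝓝[>] 0) (𝓝 0)) {c : ℝ≥0∞} (hc0 : c ≠ 0) (hc : c ≠ ∞)
    {ε ρ : ℝ} (hε : 0 < ε) (hερ : ε < ρ) (hρ : ρ ≤ r0) {E E' : Set pU} (hE' : E' ⊆ E)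
    (hball : ∀ u ∈ E', ∀ r ∈ Ioo 0 ρ, μ (dball u r) ≤ c * ENNReal.ofReal (g r)) :
    μ E' ≤ c * Hpre g ε E := by
  simp only [Hpre, ENNReal.mul_iInf_of_ne hc0 hc]
  refine le_iInf fun C => le_iInf₂ fun hcov hdiam => ?_
  have hpiece : ∀ n, μ (C n ∩ E') ≤ c * gaugeOf g (C n) := fun n => by
    rcases (C n ∩ E').eq_empty_or_nonempty with h | ⟨u, huC, huE'⟩
    · simp [h]
    exact (measure_mono inter_subset_left).trans <| measure_le_mul_gaugeOf hg_rc hg_lim hc hρ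
      ((hdiam n).trans_lt ((ENNReal.ofReal_lt_ofReal_iff_of_nonneg hε.le).2 hερ)) huC (hball u huE')
  calc μ E' ≤ μ (⋃ n, C n ∩ E') := measure_mono fun u hu => by
        simpa [← iUnion_inter] using And.intro (hcov (hE' hu)) hu
    _ ≤ ∑' n, μ (C n ∩ E') := measure_iUnion_le _
    _ ≤ ∑' n, c * gaugeOf g (C n) := ENNReal.tsum_le_tsum hpiece
    _ = c * ∑' n, gaugeOf g (C n) := ENNReal.tsum_mul_left

lemma measure_le_mul_Hmeas_of_upperDensity_lt (hr0 : 0 < r0)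
    (hg_rc : ∀ r ∈ Ioo 0 r0, ContinuousWithinAt g (Ici r) r)
    (hg_lim : Tendsto g (𝓝[>] 0) (𝓝 0)) {c : ℝ≥0∞} (hc : c ≠ ∞) {E : Set pU}
    (hE : ∀ u ∈ E, upperDensity μ g u < c) : μ E ≤ c * Hmeas g E := by
  rcases E.eq_empty_or_nonempty with rfl | ⟨u₀, hu₀⟩
  · simp
  have hc0 : c ≠ 0 := (hE u₀ hu₀).ne_bot
  let ρ : ℕ → ℝ := fun m => min r0 (1 / (m + 1))
  let E' : ℕ → Set pU := fun m =>
    {u ∈ E | ∀ r ∈ Ioo 0 (ρ m), μ (dball u r) ≤ c * ENNReal.ofReal (g r)}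
  have hmono : Monotone E' := fun m k hmk u hu =>
    ⟨hu.1, fun r hr => hu.2 r
      ⟨hr.1, hr.2.trans_le (min_le_min le_rfl (Nat.one_div_le_one_div hmk))⟩⟩
  have hcover : E ⊆ ⋃ m, E' m := fun u hu => by
    obtain ⟨δ, hδ : 0 < δ, hδE⟩ :=
      mem_nhdsGT_iff_exists_Ioo_subset.1 (eventually_lt_of_limsup_lt (hE u hu))
    obtain ⟨m, hm⟩ := exists_nat_one_div_lt hδ
    refine mem_iUnion.2 ⟨m, hu, fun r hr => ?_⟩
    have hr' : r ∈ Ioo 0 δ := ⟨hr.1, (hr.2.trans_le (min_le_right _ _)).trans hm⟩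
    exact ((ENNReal.div_le_iff_le_mul (Or.inr hc) (Or.inl ENNReal.ofReal_ne_top)).1
      (hδE hr').le)
  calc μ E ≤ μ (⋃ m, E' m) := measure_mono hcover
    _ = ⨆ m, μ (E' m) := hmono.measure_iUnion
    _ ≤ c * Hmeas g E := iSup_le fun m => by
      have hρ : 0 < ρ m := lt_min hr0 Nat.one_div_pos_of_nat
      exact (measure_le_mul_Hpre hg_rc hg_lim hc0 hc (half_pos hρ) (half_lt_self hρ)
        (min_le_left _ _) (sep_subset _ _) fun u hu => hu.2).trans
        (mul_le_mul_right (Hpre_le_Hmeas g (half_pos hρ) E) c)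

lemma measure_le_mul_Hmeas_of_upperDensity_le (hr0 : 0 < r0)
    (hg_rc : ∀ r ∈ Ioo 0 r0, ContinuousWithinAt g (Ici r) r)
    (hg_lim : Tendsto g (𝓝[>] 0) (𝓝 0)) {c : ℝ≥0∞} (hc0 : c ≠ 0) (hc : c ≠ ∞) {E : Set pU}
    (hE : ∀ u ∈ E, upperDensity μ g u ≤ c) : μ E ≤ c * Hmeas g E := by
  rcases eq_or_ne (Hmeas g E) ∞ with hH | hH
  · simp [hH, hc0]
  have : (𝓝[>] c).NeBot := nhdsGT_neBot_of_exists_gt ⟨∞, hc.lt_top⟩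
  refine ge_of_tendsto (ENNReal.Tendsto.mul_const
    (tendsto_nhdsWithin_of_tendsto_nhds (s := Ioi c) tendsto_id) (Or.inr hH)) ?_
  filter_upwards [Ioo_mem_nhdsGT hc.lt_top] with c' hc'
  exact measure_le_mul_Hmeas_of_upperDensity_lt hr0 hg_rc hg_lim hc'.2.ne
    fun u hu => (hE u hu).trans_lt hc'.1

lemma Hmeas_eq_zero_of_measure_eq_zero [μ.OuterRegular] (hr0 : 0 < r0)
    (hg_mono : MonotoneOn g (Ioo 0 r0)) {c : ℝ≥0∞} (hc : c ≠ 0) {F : Set pU} (hμF : μ F = 0)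
    (hF : ∀ u ∈ F, c ≤ upperDensity μ g u) : Hmeas g F = 0 := by
  have := mul_Hmeas_le_of_le_upperDensity hr0 hg_mono hF
  rwa [hμF, nonpos_iff_eq_zero, mul_eq_zero, or_iff_right hc] at this

end Density

open MeasureTheory in
theorem Hmeas_eq_density_general
    (r0 : ℝ) (hr0 : 0 < r0) (g : ℝ → ℝ)
    (hg_mono : MonotoneOn g (Set.Ioo 0 r0))
    (hg_rc : ∀ r ∈ Set.Ioo 0 r0, ContinuousWithinAt g (Set.Ici r) r)
    (hg_lim : Filter.Tendsto g (nhdsWithin 0 (Set.Ioi 0)) (nhds 0))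
    (μ : Measure pU) [IsFiniteMeasure μ]
    (κ κ0 : ℝ) (hκ : 0 < κ) (hκ0 : 0 < κ0)
    (hae : ∀ᵐ u ∂μ, Filter.limsup (fun r : ℝ => μ (dball u r) / ENNReal.ofReal (g r))
        (nhdsWithin 0 (Set.Ioi 0)) = ENNReal.ofReal κ)
    (hnull : Hmeas g {u : pU |
      Filter.limsup (fun r : ℝ => μ (dball u r) / ENNReal.ofReal (g r))
        (nhdsWithin 0 (Set.Ioi 0)) ≤ ENNReal.ofReal κ0} = 0) :
    ∀ A : Set pU, MeasurableSet A →
      Hmeas g (A ∩ msupport μ) = (ENNReal.ofReal κ)⁻¹ * μ A := by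
  intro A _
  have hκ' : ENNReal.ofReal κ ≠ 0 := (ENNReal.ofReal_pos.2 hκ).ne'
  let G := {u | upperDensity μ g u = ENNReal.ofReal κ}
  have hG : μ Gᶜ = 0 := ae_iff.1 hae
  let N := Gᶜ ∩ {u | ENNReal.ofReal κ0 < upperDensity μ g u}
  have hN : Hmeas g N = 0 := Hmeas_eq_zero_of_measure_eq_zero hr0 hg_mono
    (ENNReal.ofReal_pos.2 hκ0).ne' (measure_mono_null inter_subset_left hG) fun u hu => hu.2.le
  have hsplit : A ⊆ (A ∩ G) ∪ ({u | upperDensity μ g u ≤ ENNReal.ofReal κ0} ∪ N) := by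
    intro u hu
    by_cases huG : u ∈ G
    · exact Or.inl ⟨hu, huG⟩
    rcases le_or_gt (upperDensity μ g u) (ENNReal.ofReal κ0) with h | h
    exacts [Or.inr (Or.inl h), Or.inr (Or.inr ⟨huG, h⟩)]
  have hlow : μ A ≤ ENNReal.ofReal κ * Hmeas g (A ∩ msupport μ) := calc
    μ A = μ (A ∩ G) := (measure_inter_conull hG).symm
    _ ≤ ENNReal.ofReal κ * Hmeas g (A ∩ G) := measure_le_mul_Hmeas_of_upperDensity_le hr0 hg_rc
        hg_lim hκ' ENNReal.ofReal_ne_top fun u hu => hu.2.le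
    _ ≤ ENNReal.ofReal κ * Hmeas g (A ∩ msupport μ) := mul_le_mul_right (Hmeas_mono g
        (inter_subset_inter_right A fun u hu => mem_msupport_of_upperDensity_ne_zero
          (hu.symm ▸ hκ'))) _
  have hup : ENNReal.ofReal κ * Hmeas g (A ∩ msupport μ) ≤ μ A := calc
    ENNReal.ofReal κ * Hmeas g (A ∩ msupport μ) ≤ ENNReal.ofReal κ * Hmeas g (A ∩ G) :=
        mul_le_mul_right (Hmeas_le_of_subset_union_null g (inter_subset_left.trans hsplit)
          (Hmeas_union_null g hnull hN)) _
    _ ≤ μ (A ∩ G) := mul_Hmeas_le_of_le_upperDensity hr0 hg_mono fun u hu => hu.2.ge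
    _ ≤ μ A := measure_mono inter_subset_left
  rw [← le_antisymm hup hlow, ENNReal.inv_mul_cancel_left hκ' ENNReal.ofReal_ne_top]

open MeasureTheory in
/-- If the upper density limsup μ(B(u,r))/g(r) equals κ for μ-a.e. u and the
set where it is at most κ₀ < κ is H_g-null, then H_g(· ∩ supp μ) = κ⁻¹ μ. -/
theorem Hmeas_eq_density
    (r0 C : ℝ) (hr0 : 0 < r0) (hC : 1 < C) (g : ℝ → ℝ)
    (hg_pos : ∀ r ∈ Set.Ioo 0 r0, 0 < g r)
    (hg_mono : MonotoneOn g (Set.Ioo 0 r0))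
    (hg_rc : ∀ r ∈ Set.Ioo 0 r0, ContinuousWithinAt g (Set.Ici r) r)
    (hg_lim : Filter.Tendsto g (nhdsWithin 0 (Set.Ioi 0)) (nhds 0))
    (hg_dbl : ∀ r : ℝ, 0 < r → r < r0 / 2 → g (2 * r) ≤ C * g r)
    (μ : Measure pU) [IsFiniteMeasure μ]
    (κ κ0 : ℝ) (hκ : 0 < κ) (hκ0 : 0 < κ0) (hκκ0 : κ0 < κ)
    (hae : ∀ᵐ u ∂μ, Filter.limsup (fun r : ℝ => μ (dball u r) / ENNReal.ofReal (g r))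
        (nhdsWithin 0 (Set.Ioi 0)) = ENNReal.ofReal κ)
    (hnull : Hmeas g {u : pU |
      Filter.limsup (fun r : ℝ => μ (dball u r) / ENNReal.ofReal (g r))
        (nhdsWithin 0 (Set.Ioi 0)) ≤ ENNReal.ofReal κ0} = 0) :
    ∀ A : Set pU, MeasurableSet A →
      Hmeas g (A ∩ msupport μ) = (ENNReal.ofReal κ)⁻¹ * μ A :=
  Hmeas_eq_density_general r0 hr0 g hg_mono hg_rc hg_lim μ κ κ0 hκ hκ0 hae hnull
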